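/- Let m ≥ 1 be a natural number and n > 0 a real number. Let L₀ be a real random variable with distribution N(m/(2n), m/n) and L₁ a real random variable with distribution N(−m/(2n), m/n). For any threshold t ∈ ℝ, set α = P(L₀ ≤ t) and β = P(L₁ ≤ t). Then Φ⁻¹(1−α) + Φ⁻¹(β) = √(m/n); in quantile notation, z_α + z_{1−β} = √(m/n). -/

import Mathlib

open MeasureTheory ProbabilityTheory

/-- Φ: the cumulative distribution function of the standard normal distribution N(0,1). -/
noncomputable def stdNormalCDF (x : ℝ) : ℝ :=
  ((gaussianReal 0 1) (Set.Iic x)).toReal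

/-- Φ⁻¹: the inverse of the standard normal CDF (on (0,1)). -/
noncomputable def stdNormalCDFInv : ℝ → ℝ :=
  Function.invFun stdNormalCDF

/-! Standardizing, `α = Φ((t - μ₀)/σ)` and `β = Φ((t - μ₁)/σ)` for Gaussians `N(μᵢ, σ²)`.
By the symmetry `Φ(-x) = 1 - Φ(x)` the quantities `1 - α` and `β` are again values of `Φ`,
and `Φ` is strictly increasing, so `Φ⁻¹` undoes it: `z_α + z_{1-β} = (μ₀ - μ₁)/σ`.
Here `μ₀ - μ₁ = m/n = σ²`, which gives `σ = √(m/n)`. -/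

open Set NNReal

lemma stdNormalCDF_eq_measureReal (x : ℝ) : stdNormalCDF x = (gaussianReal 0 1).real (Iic x) := rfl

lemma gaussianReal_map_standardize (μ : ℝ) {v : ℝ≥0} (hv : v ≠ 0) :
    (gaussianReal μ v).map (fun x ↦ (x - μ) / √(v : ℝ)) = gaussianReal 0 1 := by
  have hcomp : (fun x ↦ (x - μ) / √(v : ℝ)) = (· / √(v : ℝ)) ∘ (· - μ) := rfl
  rw [hcomp, ← Measure.map_map (by fun_prop) (by fun_prop), gaussianReal_map_sub_const,
    gaussianReal_map_div_const, sub_self, zero_div]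
  congr 1
  ext
  simp [Real.sq_sqrt v.coe_nonneg, hv]

lemma gaussianReal_real_Iic (μ : ℝ) {v : ℝ≥0} (hv : v ≠ 0) (t : ℝ) :
    (gaussianReal μ v).real (Iic t) = stdNormalCDF ((t - μ) / √(v : ℝ)) := by
  have hσ : 0 < √(v : ℝ) := Real.sqrt_pos.2 (by positivity)
  rw [stdNormalCDF_eq_measureReal, ← gaussianReal_map_standardize μ hv,
    map_measureReal_apply (by fun_prop) measurableSet_Iic]
  congr 1
  ext x
  simp [div_le_div_iff_of_pos_right hσ]

lemma stdNormalCDF_neg (x : ℝ) : stdNormalCDF (-x) = 1 - stdNormalCDF x := by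
  have := nullSingletonClass_gaussianReal (μ := 0) one_ne_zero
  have hsymm : (gaussianReal 0 1).map (fun y ↦ -y) = gaussianReal 0 1 := by
    simpa using gaussianReal_map_neg (μ := 0) (v := 1)
  rw [stdNormalCDF_eq_measureReal, ← hsymm, map_measureReal_apply (by fun_prop) measurableSet_Iic,
    show (fun y : ℝ ↦ -y) ⁻¹' Iic (-x) = (Iio x)ᶜ by ext; simp,
    probReal_compl_eq_one_sub measurableSet_Iio, measureReal_congr Iio_ae_eq_Iic]
  rfl

lemma stdNormalCDF_strictMono : StrictMono stdNormalCDF := by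
  have : (gaussianReal 0 1).IsOpenPosMeasure :=
    (gaussianReal_absolutelyContinuous' 0 one_ne_zero).isOpenPosMeasure
  intro a b hab
  have hIoo : 0 < gaussianReal 0 1 (Ioo a b) := (Measure.measure_Ioo_pos _).2 hab
  have hpos : 0 < (gaussianReal 0 1).real (Ioc a b) :=
    ENNReal.toReal_pos (hIoo.trans_le (measure_mono Ioo_subset_Ioc_self)).ne' (measure_ne_top _ _)
  rw [stdNormalCDF_eq_measureReal, stdNormalCDF_eq_measureReal, ← Iic_union_Ioc_eq_Iic hab.le,
    measureReal_union (Iic_disjoint_Ioc le_rfl) measurableSet_Ioc]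
  linarith

lemma stdNormalCDFInv_stdNormalCDF (x : ℝ) : stdNormalCDFInv (stdNormalCDF x) = x :=
  Function.leftInverse_invFun stdNormalCDF_strictMono.injective x

lemma stdNormalCDFInv_one_sub_gaussianReal_Iic_add (μ₀ μ₁ : ℝ) {v : ℝ≥0} (hv : v ≠ 0) (t : ℝ) :
    stdNormalCDFInv (1 - (gaussianReal μ₀ v).real (Iic t))
      + stdNormalCDFInv ((gaussianReal μ₁ v).real (Iic t)) = (μ₀ - μ₁) / √(v : ℝ) := by
  rw [gaussianReal_real_Iic _ hv, gaussianReal_real_Iic _ hv, ← stdNormalCDF_neg,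
    stdNormalCDFInv_stdNormalCDF, stdNormalCDFInv_stdNormalCDF]
  ring

lemma measureReal_setOf_le_of_map_eq {Ω : Type*} [MeasurableSpace Ω] {P : Measure Ω}
    {L : Ω → ℝ} {μ : Measure ℝ} [NeZero μ] (hL : P.map L = μ) (t : ℝ) :
    P.real {ω | L ω ≤ t} = μ.real (Iic t) := by
  rw [← hL, map_measureReal_apply_of_aemeasurable (.of_map_ne_zero (hL ▸ NeZero.ne μ))
    measurableSet_Iic]
  rfl

theorem stmt_3_general {Ω : Type*} [MeasurableSpace Ω] (P : Measure Ω)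
    (m : ℕ) (hm : 1 ≤ m) (n : ℝ) (hn : 0 < n)
    (L₀ L₁ : Ω → ℝ)
    (h₀ : P.map L₀ = gaussianReal ((m : ℝ) / (2 * n)) (Real.toNNReal ((m : ℝ) / n)))
    (h₁ : P.map L₁ = gaussianReal (-((m : ℝ) / (2 * n))) (Real.toNNReal ((m : ℝ) / n)))
    (t : ℝ) (α β : ℝ)
    (hα : α = (P {ω | L₀ ω ≤ t}).toReal)
    (hβ : β = (P {ω | L₁ ω ≤ t}).toReal) :
    stdNormalCDFInv (1 - α) + stdNormalCDFInv β = Real.sqrt ((m : ℝ) / n) := by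
  have hmn : 0 < (m : ℝ) / n := div_pos (by exact_mod_cast hm) hn
  have hv : Real.toNNReal ((m : ℝ) / n) ≠ 0 := (Real.toNNReal_pos.2 hmn).ne'
  rw [hα, hβ, ← measureReal_def, ← measureReal_def, measureReal_setOf_le_of_map_eq h₀,
    measureReal_setOf_le_of_map_eq h₁, stdNormalCDFInv_one_sub_gaussianReal_Iic_add _ _ hv,
    Real.coe_toNNReal _ hmn.le, sub_neg_eq_add,
    show (m : ℝ) / (2 * n) + m / (2 * n) = m / n by ring, Real.div_sqrt]

/-- Specialization of Theorem 1 recovering Sankararaman et al.: for a model of m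
independent binary marginals (complexity m), z_α + z_{1−β} = √(m/n). -/
theorem stmt_3 {Ω : Type*} [MeasurableSpace Ω] (P : Measure Ω) [IsProbabilityMeasure P]
    (m : ℕ) (hm : 1 ≤ m) (n : ℝ) (hn : 0 < n)
    (L₀ L₁ : Ω → ℝ)
    (h₀ : P.map L₀ = gaussianReal ((m : ℝ) / (2 * n)) (Real.toNNReal ((m : ℝ) / n)))
    (h₁ : P.map L₁ = gaussianReal (-((m : ℝ) / (2 * n))) (Real.toNNReal ((m : ℝ) / n)))
    (t : ℝ) (α β : ℝ)
    (hα : α = (P {ω | L₀ ω ≤ t}).toReal)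
    (hβ : β = (P {ω | L₁ ω ≤ t}).toReal) :
    stdNormalCDFInv (1 - α) + stdNormalCDFInv β = Real.sqrt ((m : ℝ) / n) :=
  stmt_3_general P m hm n hn L₀ L₁ h₀ h₁ t α β hα hβ
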